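/- arXiv:1204.0799 — 2 statements merged into one kernel-verified Lean document; each statement's English description precedes it below -/
import Mathlib

section
/- Let 0 < A₀ < A₁ with A₁ ≥ 2·A₀. Suppose N : [−A₁, A₀] → ℝ is continuous with 0 ≤ N(u)·m(N(u)) ≤ m₀ for some m₀ > 0, that 0 ≤ m_ρ ≤ 1, and that S(a) = 1 − a/A₁ for a ∈ [A₀, A₁], extended by S(a) = 1 for a < A₀ (so |S(s₁−u) − S(s₀−u)| ≤ |s₁−s₀|/A₁ and 0 ≤ S ≤ 1). Define N̄(s) = ∫_{A₀}^{A₁} S(a)·N(s−a)·m(N(s−a))·m_ρ(t₀+s−a) da for 0 ≤ s ≤ A₀. Then for all 0 ≤ s₀ ≤ s₁ ≤ A₀: |N̄(s₁) − N̄(s₀)| ≤ L·|s₁−s₀| with L = m₀·(3 − A₀/A₁). -/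
/-- Lipschitz propagation: the renewal output N̄ is L-Lipschitz on [0, A₀]
    with L = m₀·(3 − A₀/A₁). -/
theorem renewal_lipschitz (A₀ A₁ m₀ t₀ : ℝ) (hA₀ : 0 < A₀) (hA : A₀ < A₁)
    (hA₁ : 2 * A₀ ≤ A₁) (hm₀ : 0 < m₀)
    (N m mρ : ℝ → ℝ)
    (hNcont : Continuous N) (hmcont : Continuous m) (hmρcont : Continuous mρ)
    (hNm : ∀ u, 0 ≤ N u * m (N u) ∧ N u * m (N u) ≤ m₀)
    (hmρ : ∀ x, 0 ≤ mρ x ∧ mρ x ≤ 1)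
    (S : ℝ → ℝ) (hS : ∀ a, S a = if a < A₀ then 1 else 1 - a / A₁)
    (Nbar : ℝ → ℝ)
    (hNbar : ∀ s, Nbar s = ∫ a in A₀..A₁,
      S a * (N (s - a) * m (N (s - a))) * mρ (t₀ + s - a))
    (L : ℝ) (hL : L = m₀ * (3 - A₀ / A₁)) :
    ∀ s₀ s₁ : ℝ, 0 ≤ s₀ → s₀ ≤ s₁ → s₁ ≤ A₀ →
      |Nbar s₁ - Nbar s₀| ≤ L * |s₁ - s₀| := by
  intro s₀ s₁ hs₀ hle hs₁
  have hA₁pos : 0 < A₁ := lt_trans hA₀ hA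
  set δ : ℝ := s₁ - s₀ with hδ
  have hδ0 : 0 ≤ δ := by simp [hδ]; linarith
  have hδA₀ : δ ≤ A₀ := by simp [hδ]; linarith
  set F : ℝ → ℝ := fun u => N u * m (N u) * mρ (t₀ + u) with hFdef
  have hFcont : Continuous F := by
    exact ((hNcont.mul (hmcont.comp hNcont)).mul
      (hmρcont.comp (continuous_const.add continuous_id)))
  have hF0 : ∀ u, 0 ≤ F u := fun u =>
    mul_nonneg (hNm u).1 (hmρ (t₀ + u)).1
  have hFm₀ : ∀ u, F u ≤ m₀ := by
    intro u
    calc N u * m (N u) * mρ (t₀ + u) ≤ N u * m (N u) * 1 :=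
          mul_le_mul_of_nonneg_left (hmρ (t₀ + u)).2 (hNm u).1
      _ = N u * m (N u) := mul_one _
      _ ≤ m₀ := (hNm u).2
  have hSanti : Antitone S := by
    intro a b hab
    rw [hS a, hS b]
    by_cases ha : a < A₀
    · by_cases hb : b < A₀
      · simp [ha, hb]
      · simp only [if_pos ha, if_neg hb]
        push_neg at hb
        have : 0 ≤ b / A₁ := div_nonneg (le_trans hA₀.le hb) hA₁pos.le
        linarith
    · have hb : ¬ b < A₀ := fun h => ha (lt_of_le_of_lt hab h)
      simp only [if_neg ha, if_neg hb]
      have : a / A₁ ≤ b / A₁ := by gcongr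
      linarith
  have hS01 : ∀ a, A₀ ≤ a → a ≤ A₁ → 0 ≤ S a ∧ S a ≤ 1 := by
    intro a h1 h2
    rw [hS a, if_neg (not_lt.2 h1)]
    constructor
    · have : a / A₁ ≤ 1 := (div_le_one hA₁pos).2 h2
      linarith
    · have : 0 ≤ a / A₁ := div_nonneg (le_trans hA₀.le h1) hA₁pos.le
      linarith
  have hSlip : ∀ a b : ℝ, A₀ ≤ a → A₀ ≤ b → S a - S b = (b - a) / A₁ := by
    intro a b ha hb
    rw [hS a, hS b, if_neg (not_lt.2 ha), if_neg (not_lt.2 hb)]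
    ring
  -- integrability
  have hInt : ∀ s c d : ℝ, IntervalIntegrable (fun u => S (s - u) * F u)
      MeasureTheory.volume c d := by
    intro s c d
    have hmono : Monotone fun u => S (s - u) := by
      intro x y hxy
      exact hSanti (by linarith)
    exact hmono.intervalIntegrable.mul_continuousOn hFcont.continuousOn
  -- substitution
  have key : ∀ s : ℝ, Nbar s = ∫ u in (s - A₁)..(s - A₀), S (s - u) * F u := by
    intro s
    rw [hNbar s]
    have := intervalIntegral.integral_comp_sub_left
      (a := s - A₁) (b := s - A₀)
      (fun a => S a * (N (s - a) * m (N (s - a))) * mρ (t₀ + s - a)) s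
    have h1 : s - (s - A₁) = A₁ := by ring
    have h2 : s - (s - A₀) = A₀ := by ring
    rw [h1, h2] at this
    rw [← this]
    apply intervalIntegral.integral_congr
    intro u _
    simp only [hFdef]
    have h3 : s - (s - u) = u := by ring
    have h4 : t₀ + s - (s - u) = t₀ + u := by ring
    rw [h3, h4]
    ring
  -- splitting
  have hord1 : s₁ - A₁ ≤ s₀ - A₀ := by linarith
  set h₁ : ℝ → ℝ := fun u => S (s₁ - u) * F u with hh₁
  set h₀ : ℝ → ℝ := fun u => S (s₀ - u) * F u with hh₀
  have split1 : (∫ u in (s₁ - A₁)..(s₁ - A₀), h₁ u)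
      = (∫ u in (s₁ - A₁)..(s₀ - A₀), h₁ u) + ∫ u in (s₀ - A₀)..(s₁ - A₀), h₁ u :=
    (intervalIntegral.integral_add_adjacent_intervals (hInt s₁ _ _) (hInt s₁ _ _)).symm
  have split0 : (∫ u in (s₀ - A₁)..(s₀ - A₀), h₀ u)
      = (∫ u in (s₀ - A₁)..(s₁ - A₁), h₀ u) + ∫ u in (s₁ - A₁)..(s₀ - A₀), h₀ u :=
    (intervalIntegral.integral_add_adjacent_intervals (hInt s₀ _ _) (hInt s₀ _ _)).symm
  have hmid : (∫ u in (s₁ - A₁)..(s₀ - A₀), h₁ u) - (∫ u in (s₁ - A₁)..(s₀ - A₀), h₀ u)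
      = ∫ u in (s₁ - A₁)..(s₀ - A₀), (h₁ u - h₀ u) :=
    (intervalIntegral.integral_sub (hInt s₁ _ _) (hInt s₀ _ _)).symm
  -- bound the middle piece
  have bmid : |∫ u in (s₁ - A₁)..(s₀ - A₀), (h₁ u - h₀ u)| ≤ (m₀ * δ / A₁) * (A₁ - A₀) := by
    have hb : ∀ u ∈ Set.uIoc (s₁ - A₁) (s₀ - A₀), ‖h₁ u - h₀ u‖ ≤ m₀ * δ / A₁ := by
      intro u hu
      rw [Set.uIoc_of_le hord1] at hu
      obtain ⟨hu1, hu2⟩ := hu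
      have ha : A₀ ≤ s₀ - u := by linarith
      have hb' : A₀ ≤ s₁ - u := by linarith
      have : h₁ u - h₀ u = ((s₀ - u) - (s₁ - u)) / A₁ * F u := by
        simp only [hh₁, hh₀]
        rw [← sub_mul, hSlip _ _ hb' ha]
      rw [this]
      have h5 : (s₀ - u) - (s₁ - u) = -δ := by simp only [hδ]; ring
      rw [h5, Real.norm_eq_abs, abs_mul, abs_div, abs_neg, abs_of_nonneg hδ0,
        abs_of_pos hA₁pos, abs_of_nonneg (hF0 u)]
      rw [div_mul_eq_mul_div, mul_comm δ (F u)]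
      gcongr
      exact hFm₀ u
    have := intervalIntegral.norm_integral_le_of_norm_le_const hb
    rw [Real.norm_eq_abs] at this
    refine this.trans ?_
    have habs : |s₀ - A₀ - (s₁ - A₁)| = A₁ - A₀ - δ := by
      rw [abs_of_nonneg (by linarith)]; simp only [hδ]; ring
    rw [habs]
    have h6 : 0 ≤ m₀ * δ / A₁ := by positivity
    nlinarith
  -- bound edge pieces
  have bedge1 : |∫ u in (s₀ - A₀)..(s₁ - A₀), h₁ u| ≤ m₀ * δ := by
    have hb : ∀ u ∈ Set.uIoc (s₀ - A₀) (s₁ - A₀), ‖h₁ u‖ ≤ m₀ := by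
      intro u hu
      rw [Set.uIoc_of_le (by linarith : s₀ - A₀ ≤ s₁ - A₀)] at hu
      obtain ⟨hu1, hu2⟩ := hu
      have hS' := hS01 (s₁ - u) (by linarith) (by linarith)
      rw [Real.norm_eq_abs, hh₁]
      rw [abs_mul, abs_of_nonneg hS'.1, abs_of_nonneg (hF0 u)]
      calc S (s₁ - u) * F u ≤ 1 * m₀ :=
            mul_le_mul hS'.2 (hFm₀ u) (hF0 u) zero_le_one
        _ = m₀ := one_mul _
    have := intervalIntegral.norm_integral_le_of_norm_le_const hb
    rw [Real.norm_eq_abs] at this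
    refine this.trans ?_
    have : |s₁ - A₀ - (s₀ - A₀)| = δ := by rw [abs_of_nonneg (by linarith)]; simp only [hδ]; ring
    rw [this]
  have bedge0 : |∫ u in (s₀ - A₁)..(s₁ - A₁), h₀ u| ≤ m₀ * δ := by
    have hb : ∀ u ∈ Set.uIoc (s₀ - A₁) (s₁ - A₁), ‖h₀ u‖ ≤ m₀ := by
      intro u hu
      rw [Set.uIoc_of_le (by linarith : s₀ - A₁ ≤ s₁ - A₁)] at hu
      obtain ⟨hu1, hu2⟩ := hu
      have hS' := hS01 (s₀ - u) (by linarith) (by linarith)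
      rw [Real.norm_eq_abs, hh₀]
      rw [abs_mul, abs_of_nonneg hS'.1, abs_of_nonneg (hF0 u)]
      calc S (s₀ - u) * F u ≤ 1 * m₀ :=
            mul_le_mul hS'.2 (hFm₀ u) (hF0 u) zero_le_one
        _ = m₀ := one_mul _
    have := intervalIntegral.norm_integral_le_of_norm_le_const hb
    rw [Real.norm_eq_abs] at this
    refine this.trans ?_
    have : |s₁ - A₁ - (s₀ - A₁)| = δ := by rw [abs_of_nonneg (by linarith)]; simp only [hδ]; ring
    rw [this]
  -- assemble
  have hdecomp : Nbar s₁ - Nbar s₀ =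
      (∫ u in (s₁ - A₁)..(s₀ - A₀), (h₁ u - h₀ u))
      + (∫ u in (s₀ - A₀)..(s₁ - A₀), h₁ u)
      - (∫ u in (s₀ - A₁)..(s₁ - A₁), h₀ u) := by
    rw [key s₁, key s₀]
    have e1 : (∫ u in (s₁ - A₁)..(s₁ - A₀), S (s₁ - u) * F u)
        = ∫ u in (s₁ - A₁)..(s₁ - A₀), h₁ u := rfl
    have e0 : (∫ u in (s₀ - A₁)..(s₀ - A₀), S (s₀ - u) * F u)
        = ∫ u in (s₀ - A₁)..(s₀ - A₀), h₀ u := rfl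
    rw [e1, e0, split1, split0, ← hmid]
    ring
  rw [hdecomp]
  have habsδ : |s₁ - s₀| = δ := abs_of_nonneg hδ0
  rw [habsδ, hL]
  calc |(∫ u in (s₁ - A₁)..(s₀ - A₀), (h₁ u - h₀ u))
      + (∫ u in (s₀ - A₀)..(s₁ - A₀), h₁ u)
      - (∫ u in (s₀ - A₁)..(s₁ - A₁), h₀ u)|
      ≤ |∫ u in (s₁ - A₁)..(s₀ - A₀), (h₁ u - h₀ u)|
        + |∫ u in (s₀ - A₀)..(s₁ - A₀), h₁ u|
        + |∫ u in (s₀ - A₁)..(s₁ - A₁), h₀ u| := by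
        exact (abs_sub _ _).trans (by gcongr; exact abs_add_le _ _)
    _ ≤ (m₀ * δ / A₁) * (A₁ - A₀) + m₀ * δ + m₀ * δ := by gcongr
    _ ≤ m₀ * (3 - A₀ / A₁) * δ := by
        have h7 : (m₀ * δ / A₁) * (A₁ - A₀) = m₀ * (1 - A₀ / A₁) * δ := by
          field_simp
        rw [h7]; ring_nf; nlinarith [div_nonneg (mul_nonneg hm₀.le hδ0) hA₁pos.le]
end

section
/- The set {u > 0 : Im F(−iu) = 0}, where Im F(−iu) = −sin(A₁u)/(u²A₁) + (1 − A₀/A₁)·cos(A₀u)/u + sin(A₀u)/(u²A₁) with 0 < A₀ < A₁, has no accumulation point in (0, ∞), and 0 is not an accumulation point either. -/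
open Real Filter

private lemma analyticAt_real_sin (x : ℝ) : AnalyticAt ℝ Real.sin x := by
  have h1 : AnalyticAt ℝ (fun y : ℝ => (Complex.sin (Complex.ofRealCLM y)).re) x :=
    (Complex.reCLM.analyticAt _).comp
      (((Complex.differentiable_sin.analyticAt _).restrictScalars).comp
        (Complex.ofRealCLM.analyticAt x))
  have h2 : (fun y : ℝ => (Complex.sin (Complex.ofRealCLM y)).re) = Real.sin := by
    funext y; simp [Complex.sin_ofReal_re]
  rwa [h2] at h1

private lemma analyticAt_real_cos (x : ℝ) : AnalyticAt ℝ Real.cos x := by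
  have h1 : AnalyticAt ℝ (fun y : ℝ => (Complex.cos (Complex.ofRealCLM y)).re) x :=
    (Complex.reCLM.analyticAt _).comp
      (((Complex.differentiable_cos.analyticAt _).restrictScalars).comp
        (Complex.ofRealCLM.analyticAt x))
  have h2 : (fun y : ℝ => (Complex.cos (Complex.ofRealCLM y)).re) = Real.cos := by
    funext y; simp [Complex.cos_ofReal_re]
  rwa [h2] at h1

/-- The set of positive zeros of Im F(−iu) has no accumulation point in [0, ∞). -/
theorem imF_zero_set_discrete (A₀ A₁ : ℝ) (hA₀ : 0 < A₀) (hA : A₀ < A₁)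
    (g : ℝ → ℝ)
    (hg : ∀ u : ℝ, g u = -Real.sin (A₁ * u) / (u^2 * A₁)
        + (1 - A₀ / A₁) * Real.cos (A₀ * u) / u
        + Real.sin (A₀ * u) / (u^2 * A₁))
    (Z : Set ℝ) (hZ : Z = {u : ℝ | 0 < u ∧ g u = 0}) :
    ∀ x : ℝ, 0 ≤ x → ¬ AccPt x (Filter.principal Z) := by
  intro x _ hacc
  set h : ℝ → ℝ := fun u => Real.sin (A₀ * u) - Real.sin (A₁ * u)
      + (A₁ - A₀) * u * Real.cos (A₀ * u) with hh
  have hA₁ : (0:ℝ) < A₁ := hA₀.trans hA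
  -- h is analytic on ℝ
  have hana : AnalyticOnNhd ℝ h Set.univ := by
    intro y _
    exact (((analyticAt_real_sin _).comp ((analyticAt_const).mul analyticAt_id)).sub
        ((analyticAt_real_sin _).comp ((analyticAt_const).mul analyticAt_id))).add
      (((analyticAt_const).mul analyticAt_id).mul
        ((analyticAt_real_cos _).comp ((analyticAt_const).mul analyticAt_id)))
  -- h vanishes on Z
  have hZh : ∀ z ∈ Z, h z = 0 := by
    intro z hz
    rw [hZ] at hz
    obtain ⟨hzpos, hgz⟩ := hz
    rw [hg] at hgz
    have hz0 : z ≠ 0 := ne_of_gt hzpos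
    have hA1 : A₁ ≠ 0 := ne_of_gt hA₁
    field_simp at hgz
    rw [mul_comm z A₀] at hgz
    have key : h z * (z^3 * A₁^2) = 0 := by simp only [hh]; linear_combination (z^3 * A₁^2) * hgz
    have hne : z^3 * A₁^2 ≠ 0 := by positivity
    exact (mul_eq_zero.mp key).resolve_right hne
  -- h vanishes frequently near x (punctured)
  have hfreq : ∃ᶠ z in nhdsWithin x {x}ᶜ, h z = 0 := by
    rw [accPt_iff_frequently] at hacc
    rw [frequently_nhdsWithin_iff]
    exact hacc.mono (fun y hy => ⟨hZh y hy.2, hy.1⟩)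
  have hzero : Set.EqOn h 0 Set.univ :=
    hana.eqOn_zero_of_preconnected_of_frequently_eq_zero isPreconnected_univ
      (Set.mem_univ x) hfreq
  -- but h is nonzero at u₀ = 2πn/A₀ for large n
  obtain ⟨n, hn⟩ := exists_nat_gt (A₀ / (2 * π * (A₁ - A₀)))
  set u₀ : ℝ := 2 * π * n / A₀ with hu₀
  have hpi : (0:ℝ) < π := Real.pi_pos
  have hAd : (0:ℝ) < A₁ - A₀ := sub_pos.mpr hA
  have hAu : A₀ * u₀ = n * (2 * π) := by
    rw [hu₀, mul_div_assoc', mul_comm A₀, mul_div_assoc, div_self hA₀.ne', mul_one]; ring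
  have hsin0 : Real.sin (A₀ * u₀) = 0 := by
    rw [hAu]
    have : (n : ℝ) * (2 * π) = (2 * n : ℤ) * π := by push_cast; ring
    rw [this, Real.sin_int_mul_pi]
  have hcos1 : Real.cos (A₀ * u₀) = 1 := by
    rw [hAu, Real.cos_nat_mul_two_pi]
  have hbig : 1 < (A₁ - A₀) * u₀ := by
    have h2 : A₀ < 2 * π * (A₁ - A₀) * n := by
      have := (div_lt_iff₀ (by positivity : (0:ℝ) < 2 * π * (A₁ - A₀))).mp hn
      linarith
    have heq : (A₁ - A₀) * u₀ = (2 * π * (A₁ - A₀) * n) / A₀ := by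
      rw [hu₀]; ring
    rw [heq, lt_div_iff₀ hA₀]
    linarith
  have hne : h u₀ ≠ 0 := by
    have hs : Real.sin (A₁ * u₀) ≤ 1 := Real.sin_le_one _
    simp only [hh, hsin0, hcos1]
    nlinarith
  exact hne (hzero (Set.mem_univ u₀))
end
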